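/- arXiv:1411.0243 — 2 statements merged into one kernel-verified Lean document; each statement's English description precedes it below -/
import Mathlib

section
/- Fix η ∈ (0,1). Let Ξ be an n×n matrix of iid uniform ±1 signs. Then with overwhelming probability, Ξ has no nontrivial (1−η)n-sparse null vectors; that is, for every constant C > 0, P(there exists x ∈ ℝⁿ with x ≠ 0, |supp(x)| ≤ (1−η)n, and Ξx = 0) = O_{C,η}(n^{−C}). -/
open scoped Classical

noncomputable section

/-- The real `±1` matrix associated to a Boolean matrix (`true ↦ +1`, `false ↦ -1`). -/
def sgn2r {n : ℕ} (A : Matrix (Fin n) (Fin n) Bool) : Matrix (Fin n) (Fin n) ℝ :=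
  Matrix.of fun i j => if A i j then (1 : ℝ) else -1

/-- Probability of the event `p` for a uniform random element of the finite set `s`. -/
def cprob {α : Type*} [Fintype α] (s : Finset α) (p : α → Prop) : ℝ :=
  ((s.filter p).card : ℝ) / (s.card : ℝ)

/-!
If `Ξ x = 0` with `x` sparse, take a null vector of minimal support `S`, `#S = k`. The null
vectors supported on `S` then form a line, so some `k - 1` rows `W` already cut it out. The
vector they determine depends only on the rows in `W` and is nowhere zero on `S`, so each of the
`n - k + 1` other rows, being independent of those, is orthogonal to it with probability at most
`choose k (k / 2) / 2 ^ k ≤ (k + 1) ^ (-1 / 2)` (Erdős–Littlewood–Offord, via Sperner). The union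
bound over `(W, S)` gives `∑ k, choose n k * choose n (k - 1) * (k + 1) ^ (-(n - k + 1) / 2)`.
For `k` below a constant the binomials are polynomial in `n`; above `64 ^ ⌈1 / η⌉`, sparsity
`n - k ≥ η n` makes the last factor smaller than `8 ^ (-n)`, beating the `4 ^ n` of the binomials.
-/

open Finset Matrix Filter

namespace Nat

theorem two_mul_add_one_mul_centralBinom_sq_le (j : ℕ) :
    (2 * j + 1) * centralBinom j ^ 2 ≤ 16 ^ j := by
  induction j with
  | zero => simp
  | succ j ih =>
    refine Nat.le_of_mul_le_mul_left ?_ (pow_pos (succ_pos j) 2)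
    calc (j + 1) ^ 2 * ((2 * (j + 1) + 1) * centralBinom (j + 1) ^ 2)
        = 4 * (2 * j + 1) * (2 * j + 3) * ((2 * j + 1) * centralBinom j ^ 2) := by
          rw [show (j + 1) ^ 2 * ((2 * (j + 1) + 1) * centralBinom (j + 1) ^ 2)
            = (2 * j + 3) * ((j + 1) * centralBinom (j + 1)) ^ 2 by ring,
            succ_mul_centralBinom_succ]; ring
      _ ≤ 4 * (2 * j + 1) * (2 * j + 3) * 16 ^ j := by gcongr
      _ ≤ (j + 1) ^ 2 * 16 * 16 ^ j := Nat.mul_le_mul_right _ (by nlinarith)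
      _ = (j + 1) ^ 2 * 16 ^ (j + 1) := by ring

theorem succ_mul_choose_half_sq_le_four_pow (k : ℕ) :
    (k + 1) * k.choose (k / 2) ^ 2 ≤ 4 ^ k := by
  obtain ⟨j, rfl | rfl⟩ := even_or_odd' k
  · rw [mul_div_cancel_left₀ j two_ne_zero, ← centralBinom_eq_two_mul_choose, pow_mul]
    exact two_mul_add_one_mul_centralBinom_sq_le j
  · have hcb : centralBinom (j + 1) = 2 * (2 * j + 1).choose j := by
      rw [centralBinom_eq_two_mul_choose, show 2 * (j + 1) = 2 * j + 1 + 1 by ring,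
        choose_succ_succ, choose_symm_half]; ring
    have h := two_mul_add_one_mul_centralBinom_sq_le (j + 1)
    rw [hcb] at h
    rw [show (2 * j + 1) / 2 = j by omega]
    refine Nat.le_of_mul_le_mul_left ?_ (show 0 < 4 by norm_num)
    calc 4 * ((2 * j + 1 + 1) * (2 * j + 1).choose j ^ 2)
        ≤ (2 * (j + 1) + 1) * (2 * (2 * j + 1).choose j) ^ 2 := by ring_nf; omega
      _ ≤ 16 ^ (j + 1) := h
      _ = 4 * 4 ^ (2 * j + 1) := by rw [pow_succ, pow_succ, pow_mul]; ring

end Nat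

theorem succ_mul_sq_choose_half_div_two_pow_le_one (k : ℕ) :
    ((k : ℝ) + 1) * ((k.choose (k / 2) : ℝ) / 2 ^ k) ^ 2 ≤ 1 := by
  have h := Nat.succ_mul_choose_half_sq_le_four_pow k
  rw [show 4 ^ k = (2 ^ k) ^ 2 by rw [← pow_mul, mul_comm, pow_mul]; norm_num] at h
  rw [div_pow, mul_div_assoc', div_le_one (by positivity)]
  exact_mod_cast h

theorem card_filter_sum_sign_mul_eq_zero_le {ι : Type*} [Fintype ι] {y : ι → ℝ}
    (hy : ∀ i, y i ≠ 0) :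
    #{t : ι → Bool | ∑ i, (if t i then 1 else -1) * y i = 0}
      ≤ (Fintype.card ι).choose (Fintype.card ι / 2) := by
  set P : (ι → Bool) → Finset ι := fun t => {i | t i = decide (0 < y i)}
  have hterm (t : ι → Bool) (i : ι) :
      (if t i then 1 else -1) * y i = 2 * (if i ∈ P t then |y i| else 0) - |y i| := by
    rcases (hy i).lt_or_gt with h | h <;> cases ht : t i <;>
      simp [P, ht, h, h.not_gt, abs_of_neg, abs_of_pos] <;> ring
  have hsum (t : ι → Bool) :
      ∑ i, (if t i then 1 else -1) * y i = 2 * ∑ i ∈ P t, |y i| - ∑ i, |y i| := by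
    simp_rw [hterm, sum_sub_distrib, ← mul_sum, sum_ite_mem, univ_inter]
  have hinj : Function.Injective P := fun t₁ t₂ h => funext fun i => by
    have := Finset.ext_iff.1 h i
    simp only [P, mem_filter, mem_univ, true_and] at this
    revert this; cases t₁ i <;> cases t₂ i <;> cases decide (0 < y i) <;> simp
  have hanti : IsAntichain (· ⊆ ·)
      (({t | ∑ i, (if t i then 1 else -1) * y i = 0} : Finset _).image P : Set (Finset ι)) := by
    simp only [coe_image]
    rintro _ ⟨t₁, ht₁, rfl⟩ _ ⟨t₂, ht₂, rfl⟩ hne hsub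
    obtain ⟨i, hi₂, hi₁⟩ := exists_of_ssubset (hsub.ssubset_of_ne hne)
    have := sum_lt_sum_of_subset hsub hi₂ hi₁ (abs_pos.2 (hy i)) fun j _ _ => abs_nonneg (y j)
    simp only [coe_filter, mem_univ, true_and, Set.mem_ofPred_eq, hsum] at ht₁ ht₂
    linarith
  rw [← card_image_of_injective _ hinj]
  exact hanti.sperner

theorem cprob_le_one {α : Type*} [Fintype α] (s : Finset α) (p : α → Prop) : cprob s p ≤ 1 :=
  div_le_one_of_le₀ (by exact_mod_cast card_filter_le s p) (Nat.cast_nonneg _)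

theorem cprob_mono {α : Type*} [Fintype α] (s : Finset α) {p q : α → Prop}
    (h : ∀ a, p a → q a) : cprob s p ≤ cprob s q :=
  div_le_div_of_nonneg_right
    (by exact_mod_cast card_le_card (monotone_filter_right s fun a _ => h a)) (Nat.cast_nonneg _)

theorem cprob_le_sum {α ι : Type*} [Fintype α] (s : Finset α) {p : α → Prop} (I : Finset ι)
    (q : ι → α → Prop) (h : ∀ a ∈ s, p a → ∃ i ∈ I, q i a) :
    cprob s p ≤ ∑ i ∈ I, cprob s (q i) := by
  simp only [cprob, ← sum_div]
  gcongr
  calc (#(s.filter p) : ℝ) ≤ #(I.biUnion fun i => s.filter (q i)) := by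
        gcongr
        intro a ha
        obtain ⟨has, hpa⟩ := mem_filter.1 ha
        obtain ⟨i, hi, hqa⟩ := h a has hpa
        exact mem_biUnion.2 ⟨i, hi, mem_filter.2 ⟨has, hqa⟩⟩
    _ ≤ ∑ i ∈ I, (#(s.filter (q i)) : ℝ) := by exact_mod_cast card_biUnion_le

theorem card_filter_restrict_and_forall_le {ι ρ : Type*} [Fintype ι] [DecidableEq ι] [Fintype ρ]
    (W : Finset ι) (C₀ : (W → ρ) → Prop) (q : (W → ρ) → ρ → Prop) {L : ℝ}
    (hq : ∀ a, C₀ a → (#{c | q a c} : ℝ) ≤ L) :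
    (#{f : ι → ρ | C₀ (fun r => f r) ∧ ∀ r ∉ W, q (fun r => f r) (f r)} : ℝ)
      ≤ #{a | C₀ a} * L ^ (Fintype.card ι - #W) := by
  set e := (Equiv.piEquivPiSubtypeProd (· ∈ W) fun _ : ι => ρ).symm
  have hcompl : Fintype.card {r // r ∉ W} = Fintype.card ι - #W := by
    rw [Fintype.card_subtype_compl, Fintype.card_coe]
  have hfiber (a : W → ρ) : #{b : {r // r ∉ W} → ρ | ∀ r, q a (b r)}
      = #{c | q a c} ^ (Fintype.card ι - #W) := by
    calc #{b : {r // r ∉ W} → ρ | ∀ r, q a (b r)}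
        = #(Fintype.piFinset fun _ : {r // r ∉ W} => ({c | q a c} : Finset ρ)) :=
          congrArg card (Finset.ext fun b => by simp [Fintype.mem_piFinset])
      _ = _ := by rw [Fintype.card_piFinset, prod_const, card_univ, hcompl]
  calc (#{f : ι → ρ | C₀ (fun r => f r) ∧ ∀ r ∉ W, q (fun r => f r) (f r)} : ℝ)
      = ∑ a, (#{b : {r // r ∉ W} → ρ | C₀ a ∧ ∀ r, q a (b r)} : ℝ) := by
        rw [card_filter, ← e.sum_comp, Fintype.sum_prod_type]
        push_cast
        refine sum_congr rfl fun a _ => ?_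
        rw [card_filter]
        push_cast
        refine sum_congr rfl fun b _ => ?_
        simp +contextual [e, Equiv.piEquivPiSubtypeProd_symm_apply]
    _ ≤ ∑ a, if C₀ a then L ^ (Fintype.card ι - #W) else 0 := by
        refine sum_le_sum fun a _ => ?_
        split_ifs with h
        · simp only [h, true_and, hfiber]
          push_cast
          exact pow_le_pow_left₀ (Nat.cast_nonneg _) (hq a h) _
        · simp [h]
    _ = #{a | C₀ a} * L ^ (Fintype.card ι - #W) := by
        rw [← sum_filter, sum_const, nsmul_eq_mul]

theorem cprob_restrict_and_forall_le {ι ρ : Type*} [Fintype ι] [DecidableEq ι] [Fintype ρ]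
    [Nonempty ρ] (W : Finset ι) (C₀ : (W → ρ) → Prop) (q : (W → ρ) → ρ → Prop) {p : ℝ}
    (hq : ∀ a, C₀ a → cprob univ (q a) ≤ p) :
    cprob univ (fun f : ι → ρ => C₀ (fun r => f r) ∧ ∀ r ∉ W, q (fun r => f r) (f r))
      ≤ cprob univ C₀ * p ^ (Fintype.card ι - #W) := by
  have hρ : (0 : ℝ) < Fintype.card ρ := Nat.cast_pos.2 Fintype.card_pos
  have hcount := card_filter_restrict_and_forall_le W C₀ q (L := p * Fintype.card ρ) fun a ha => by
    simpa only [cprob, card_univ, div_le_iff₀ hρ] using hq a ha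
  have hsplit : (Fintype.card ρ : ℝ) ^ Fintype.card ι
      = (Fintype.card ρ : ℝ) ^ #W * (Fintype.card ρ : ℝ) ^ (Fintype.card ι - #W) := by
    rw [← pow_add, Nat.add_sub_cancel' (card_le_univ W)]
  simp only [cprob, card_univ, Fintype.card_fun, Fintype.card_coe, Nat.cast_pow, hsplit]
  rw [div_le_iff₀ (by positivity)]
  -- the two filters differ only in their `Decidable` instances
  refine le_of_eq_of_le (by congr 2; ext; simp) (hcount.trans_eq ?_)
  field_simp
  ring

theorem cprob_sum_sign_mul_eq_zero_le {ι : Type*} [Fintype ι] [DecidableEq ι] (S : Finset ι)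
    {y : S → ℝ} (hy : ∀ i, y i ≠ 0) :
    cprob univ (fun t : ι → Bool => ∑ i : S, (if t i then 1 else -1) * y i = 0)
      ≤ (#S).choose (#S / 2) / 2 ^ #S := by
  set C₀ : (S → Bool) → Prop := fun u => ∑ i, (if u i then 1 else -1) * y i = 0
  calc cprob univ (fun t : ι → Bool => ∑ i : S, (if t i then 1 else -1) * y i = 0)
      = cprob univ (fun t : ι → Bool => C₀ (fun i => t i) ∧ ∀ i ∉ S, True) := by simp [C₀]
    _ ≤ cprob univ C₀ * 1 ^ (Fintype.card ι - #S) :=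
        cprob_restrict_and_forall_le S C₀ (fun _ _ => True) fun _ _ => cprob_le_one _ _
    _ ≤ (#S).choose (#S / 2) / 2 ^ #S := by
        have h : #{u | C₀ u} ≤ (#S).choose (#S / 2) := by
          convert card_filter_sum_sign_mul_eq_zero_le hy <;> simp
        simp only [cprob, one_pow, mul_one, card_univ, Fintype.card_fun, Fintype.card_bool,
          Fintype.card_coe, Nat.cast_pow, Nat.cast_ofNat]
        exact div_le_div_of_nonneg_right (by exact_mod_cast h) (by positivity)

open Module in
theorem Submodule.exists_finset_card_add_finrank_le {K V ρ : Type*} [Field K] [AddCommGroup V]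
    [Module K V] [FiniteDimensional K V] (f : ρ → Dual K V) (V₀ : Submodule K V) :
    ∃ T : Finset ρ, #T + finrank K ↥(V₀ ⊓ ⨅ r, LinearMap.ker (f r)) ≤ finrank K V₀ ∧
      V₀ ⊓ ⨅ r ∈ T, LinearMap.ker (f r) ≤ ⨅ r, LinearMap.ker (f r) := by
  induction hd : finrank K V₀ using Nat.strong_induction_on generalizing V₀ with
  | _ d ih =>
  by_cases hV : V₀ ≤ ⨅ r, LinearMap.ker (f r)
  · refine ⟨∅, ?_, by simpa using hV⟩
    rw [card_empty, zero_add, ← hd]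
    exact Submodule.finrank_mono inf_le_left
  · obtain ⟨v, hv, hvK⟩ := SetLike.not_le_iff_exists.1 hV
    obtain ⟨r, hr⟩ : ∃ r, f r v ≠ 0 := by
      simpa [Submodule.mem_iInf] using hvK
    have hlt : V₀ ⊓ LinearMap.ker (f r) < V₀ :=
      inf_le_left.lt_of_not_ge fun h => hr (Submodule.mem_inf.1 (h hv)).2
    obtain ⟨T, hcard, hT⟩ :=
      ih _ (hd ▸ Submodule.finrank_lt_finrank_of_lt hlt) (V₀ ⊓ LinearMap.ker (f r)) rfl
    have hker : V₀ ⊓ LinearMap.ker (f r) ⊓ ⨅ r, LinearMap.ker (f r)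
        = V₀ ⊓ ⨅ r, LinearMap.ker (f r) := by
      rw [inf_assoc, inf_eq_right.2 (iInf_le (fun r => LinearMap.ker (f r)) r)]
    refine ⟨insert r T, ?_, ?_⟩
    · rw [hker] at hcard
      have := card_insert_le r T
      have := Submodule.finrank_lt_finrank_of_lt hlt
      omega
    · rwa [Finset.iInf_insert, ← inf_assoc]

namespace Matrix

variable {K m ι : Type*} [Field K] [Fintype ι]

theorem exists_mulVec_eq_zero_card_support_minimal (M : Matrix m ι K) {x : ι → K} (hx : x ≠ 0)
    (hMx : M *ᵥ x = 0) :
    ∃ y, y ≠ 0 ∧ M *ᵥ y = 0 ∧ #{i | y i ≠ 0} ≤ #{i | x i ≠ 0} ∧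
      ∀ z, z ≠ 0 → M *ᵥ z = 0 → #{i | y i ≠ 0} ≤ #{i | z i ≠ 0} := by
  obtain ⟨y, ⟨hy, hMy⟩, hmin⟩ := (measure fun z : ι → K => #{i | z i ≠ 0}).wf.has_min
    {z | z ≠ 0 ∧ M *ᵥ z = 0} ⟨x, hx, hMx⟩
  exact ⟨y, hy, hMy, not_lt.1 (hmin x ⟨hx, hMx⟩), fun z hz hMz => not_lt.1 (hmin z ⟨hz, hMz⟩)⟩

theorem exists_eq_smul_of_card_support_minimal {M : Matrix m ι K} {y : ι → K} (hy : y ≠ 0)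
    (hMy : M *ᵥ y = 0) (hmin : ∀ z, z ≠ 0 → M *ᵥ z = 0 → #{i | y i ≠ 0} ≤ #{i | z i ≠ 0})
    {z : ι → K} (hMz : M *ᵥ z = 0) (hzy : ∀ i, y i = 0 → z i = 0) : ∃ c : K, z = c • y := by
  obtain ⟨i₀, hi₀⟩ : ∃ i, y i ≠ 0 := Function.ne_iff.1 hy
  -- a null vector supported in `supp y \ {i₀}`, hence zero by minimality
  set w := y i₀ • z - z i₀ • y
  have hw : w = 0 := by
    by_contra hw
    have hsub : ({i | w i ≠ 0} : Finset ι) ⊆ ({i | y i ≠ 0} : Finset ι).erase i₀ := by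
      intro i hi
      simp only [mem_filter, mem_univ, true_and, mem_erase] at hi ⊢
      refine ⟨fun h => hi (by simp [w, h]; ring), fun h => hi (by simp [w, h, hzy i h])⟩
    have := card_le_card hsub
    rw [card_erase_of_mem (by simpa using hi₀)] at this
    have := hmin w hw (by simp [w, mulVec_sub, mulVec_smul, hMy, hMz])
    have : 0 < #{i | y i ≠ 0} := card_pos.2 ⟨i₀, by simpa using hi₀⟩
    omega
  refine ⟨z i₀ / y i₀, funext fun i => ?_⟩
  have := congrFun hw i
  simp only [w, Pi.sub_apply, Pi.smul_apply, smul_eq_mul, Pi.zero_apply] at this ⊢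
  field_simp
  linear_combination this

theorem submatrix_mulVec_restrict (M : Matrix m ι K) {S : Finset ι} {z : ι → K}
    (hz : ∀ i ∉ S, z i = 0) : M.submatrix id ((↑) : S → ι) *ᵥ (fun i : S => z i) = M *ᵥ z := by
  funext r
  simp only [mulVec, dotProduct, submatrix_apply, id]
  rw [sum_coe_sort S fun i => M r i * z i]
  exact sum_subset (subset_univ S) fun i _ hi => by simp [hz i hi]

theorem exists_rows_cols_of_mulVec_eq_zero (M : Matrix m ι K) {x : ι → K} (hx : x ≠ 0)
    (hMx : M *ᵥ x = 0) :
    ∃ (S : Finset ι) (W : Finset m), #S ≤ #{i | x i ≠ 0} ∧ #W < #S ∧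
      (∃ u : S → K, u ≠ 0 ∧ M.submatrix id (↑) *ᵥ u = 0) ∧
      ∀ u : S → K, u ≠ 0 → M.submatrix ((↑) : W → m) (↑) *ᵥ u = 0 →
        (∀ i, u i ≠ 0) ∧ M.submatrix id (↑) *ᵥ u = 0 := by
  obtain ⟨y, hy, hMy, hyx, hmin⟩ := exists_mulVec_eq_zero_card_support_minimal M hx hMx
  set S : Finset ι := {i | y i ≠ 0}
  set MS := M.submatrix id ((↑) : S → ι)
  set u₀ : S → K := fun i => y i
  have hyS : ∀ i ∉ S, y i = 0 := by simp [S]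
  have hu₀ (i : S) : u₀ i ≠ 0 := (mem_filter.1 i.2).2
  have hu₀ne : u₀ ≠ 0 := by
    obtain ⟨i₀, hi₀⟩ : ∃ i, y i ≠ 0 := Function.ne_iff.1 hy
    exact Function.ne_iff.2 ⟨⟨i₀, by simpa [S] using hi₀⟩, hu₀ _⟩
  have hMSu₀ : MS *ᵥ u₀ = 0 := (M.submatrix_mulVec_restrict hyS).trans hMy
  have hker (u : S → K) (hu : MS *ᵥ u = 0) : ∃ c : K, u = c • u₀ := by
    set z : ι → K := fun i => if h : i ∈ S then u ⟨i, h⟩ else 0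
    have hzS : ∀ i ∉ S, z i = 0 := fun i hi => dif_neg hi
    have hzu : (fun i : S => z i) = u := funext fun i => dif_pos i.2
    obtain ⟨c, hc⟩ := exists_eq_smul_of_card_support_minimal hy hMy hmin
      (by rw [← M.submatrix_mulVec_restrict hzS, hzu, hu])
      fun i hi => hzS i (by simpa [S] using hi)
    exact ⟨c, by rw [← hzu, hc]; rfl⟩
  let f : m → Module.Dual K (S → K) := fun r => (LinearMap.proj r).comp MS.mulVecLin
  have hmem (u : S → K) : u ∈ ⨅ r, LinearMap.ker (f r) ↔ MS *ᵥ u = 0 := by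
    simp [Submodule.mem_iInf, f, funext_iff]
  have hspan : ⨅ r, LinearMap.ker (f r) = K ∙ u₀ := by
    refine le_antisymm (fun u hu => ?_)
      ((Submodule.span_singleton_le_iff_mem _ _).2 ((hmem u₀).2 hMSu₀))
    obtain ⟨c, rfl⟩ := hker u ((hmem u).1 hu)
    exact Submodule.smul_mem _ c (Submodule.mem_span_singleton_self u₀)
  obtain ⟨W, hcard, hW⟩ := Submodule.exists_finset_card_add_finrank_le f ⊤
  rw [top_inf_eq, hspan, finrank_span_singleton hu₀ne, finrank_top,
    Module.finrank_fintype_fun_eq_card, Fintype.card_coe] at hcard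
  refine ⟨S, W, hyx, by omega, ⟨u₀, hu₀ne, hMSu₀⟩, fun u hu hWu => ?_⟩
  have hMSu : MS *ᵥ u = 0 := (hmem u).1 <| hW <| Submodule.mem_inf.2 ⟨trivial, by
    simp only [Submodule.mem_iInf, LinearMap.mem_ker]
    exact fun r hr => congrFun hWu ⟨r, hr⟩⟩
  obtain ⟨c, rfl⟩ := hker u hMSu
  have hc : c ≠ 0 := by rintro rfl; exact hu (zero_smul _ _)
  exact ⟨fun i => mul_ne_zero hc (hu₀ i), hMSu⟩

def kerVec (B : Matrix m ι K) : ι → K :=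
  if h : ∃ u, u ≠ 0 ∧ B *ᵥ u = 0 then h.choose else 0

theorem kerVec_spec {B : Matrix m ι K} (h : ∃ u, u ≠ 0 ∧ B *ᵥ u = 0) :
    B.kerVec ≠ 0 ∧ B *ᵥ B.kerVec = 0 := by
  rw [kerVec, dif_pos h]
  exact h.choose_spec

def blockKerVec (M : Matrix m ι K) (W : Finset m) (S : Finset ι) : S → K :=
  (M.submatrix ((↑) : W → m) ((↑) : S → ι)).kerVec

def IsBlockNull (M : Matrix m ι K) (W : Finset m) (S : Finset ι) : Prop :=
  (∀ i, M.blockKerVec W S i ≠ 0) ∧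
    ∀ r ∉ W, (M.submatrix id ((↑) : S → ι) *ᵥ M.blockKerVec W S) r = 0

theorem exists_isBlockNull_of_mulVec_eq_zero [Fintype m] (M : Matrix m ι K)
    (hcard : Fintype.card ι ≤ Fintype.card m) {x : ι → K} (hx : x ≠ 0) (hMx : M *ᵥ x = 0) :
    ∃ (W : Finset m) (S : Finset ι),
      0 < #S ∧ #S ≤ #{i | x i ≠ 0} ∧ #W + 1 = #S ∧ M.IsBlockNull W S := by
  obtain ⟨S, W₀, hSx, hW₀S, ⟨u₀, hu₀, hMu₀⟩, hrigid⟩ := M.exists_rows_cols_of_mulVec_eq_zero hx hMx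
  obtain ⟨W, hW₀W, hW⟩ := exists_superset_card_eq (n := #S - 1) (s := W₀) (by omega)
    (by have := card_le_univ S; omega)
  refine ⟨W, S, by omega, hSx, by omega, ?_⟩
  obtain ⟨hne, hnull⟩ := kerVec_spec (B := M.submatrix ((↑) : W → m) ((↑) : S → ι))
    ⟨u₀, hu₀, funext fun r => congrFun hMu₀ r⟩
  obtain ⟨hnz, hMS⟩ := hrigid _ hne (funext fun r => congrFun hnull ⟨r, hW₀W r.2⟩)
  exact ⟨hnz, fun r _ => congrFun hMS r⟩

end Matrix

theorem cprob_isBlockNull_sgn2r_le {n : ℕ} (W S : Finset (Fin n)) :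
    cprob univ (fun A : Matrix (Fin n) (Fin n) Bool => (sgn2r A).IsBlockNull W S)
      ≤ ((#S).choose (#S / 2) / 2 ^ #S : ℝ) ^ (n - #W) := by
  set B : (W → Fin n → Bool) → Matrix W S ℝ := fun a => Matrix.of fun r c => if a r c then 1 else -1
  set C₀ : (W → Fin n → Bool) → Prop := fun a => ∀ i, (B a).kerVec i ≠ 0
  set q : (W → Fin n → Bool) → (Fin n → Bool) → Prop :=
    fun a t => ∑ i : S, (if t i then 1 else -1) * (B a).kerVec i = 0
  calc cprob univ (fun A : Matrix (Fin n) (Fin n) Bool => (sgn2r A).IsBlockNull W S)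
      = cprob univ (fun f : Fin n → Fin n → Bool => C₀ (fun r => f r) ∧
          ∀ r ∉ W, q (fun r => f r) (f r)) := rfl
    _ ≤ cprob univ C₀ * ((#S).choose (#S / 2) / 2 ^ #S : ℝ) ^ (Fintype.card (Fin n) - #W) :=
        cprob_restrict_and_forall_le W C₀ q fun a ha => cprob_sum_sign_mul_eq_zero_le S ha
    _ ≤ ((#S).choose (#S / 2) / 2 ^ #S : ℝ) ^ (n - #W) := by
        rw [Fintype.card_fin]
        exact mul_le_of_le_one_left (by positivity) (cprob_le_one _ _)

theorem cprob_exists_sparse_null_sgn2r_le (n m : ℕ) :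
    cprob univ (fun A : Matrix (Fin n) (Fin n) Bool =>
        ∃ x : Fin n → ℝ, x ≠ 0 ∧ #{i | x i ≠ 0} ≤ m ∧ sgn2r A *ᵥ x = 0)
      ≤ ∑ k ∈ Icc 1 m,
          n.choose k * n.choose (k - 1) * ((k.choose (k / 2) : ℝ) / 2 ^ k) ^ (n - (k - 1)) := by
  set I := (Icc 1 m).sigma fun k => powersetCard (k - 1) (univ : Finset (Fin n)) ×ˢ
    powersetCard k (univ : Finset (Fin n))
  calc _ ≤ ∑ i ∈ I, cprob univ fun A => (sgn2r A).IsBlockNull i.2.1 i.2.2 := by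
        refine cprob_le_sum _ _ _ fun A _ hA => ?_
        obtain ⟨x, hx, hxm, hAx⟩ := hA
        obtain ⟨W, S, hS, hSx, hWS, hA⟩ :=
          (sgn2r A).exists_isBlockNull_of_mulVec_eq_zero le_rfl hx hAx
        refine ⟨⟨#S, W, S⟩, ?_, hA⟩
        simp only [I, mem_sigma, mem_Icc, mem_product, mem_powersetCard, subset_univ, true_and,
          and_true]
        omega
    _ ≤ ∑ i ∈ I, ((i.1.choose (i.1 / 2) : ℝ) / 2 ^ i.1) ^ (n - (i.1 - 1)) := by
        refine sum_le_sum fun ⟨k, W, S⟩ hi => ?_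
        simp only [I, mem_sigma, mem_product, mem_powersetCard] at hi
        simpa only [hi.2.1.2, hi.2.2.2] using cprob_isBlockNull_sgn2r_le W S
    _ = _ := by
        rw [sum_sigma]
        refine sum_congr rfl fun k _ => ?_
        dsimp only
        rw [sum_const, card_product, card_powersetCard, card_powersetCard, card_univ,
          Fintype.card_fin, nsmul_eq_mul]
        push_cast
        ring

theorem choose_mul_choose_mul_pow_le_of_le {n k c : ℕ} (hk : 1 ≤ k) (hkn : k ≤ n) (hkc : k ≤ c) :
    n.choose k * n.choose (k - 1) * ((k.choose (k / 2) : ℝ) / 2 ^ k) ^ (n - (k - 1))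
      ≤ 2 ^ c * n ^ (2 * c) * (3 / 4) ^ n := by
  set p := (k.choose (k / 2) : ℝ) / 2 ^ k
  have hn : (1 : ℝ) ≤ n := by exact_mod_cast hk.trans hkn
  have hp : p ≤ 3 / 4 := by
    have h := succ_mul_sq_choose_half_div_two_pow_le_one k
    have : (2 : ℝ) ≤ k + 1 := by norm_cast; omega
    exact (pow_le_pow_iff_left₀ (by positivity) (by norm_num) two_ne_zero).1 (by nlinarith)
  have hchoose (j : ℕ) (hj : j ≤ c) : (n.choose j : ℝ) ≤ n ^ c :=
    calc (n.choose j : ℝ) ≤ n ^ j := by exact_mod_cast Nat.choose_le_pow n j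
      _ ≤ n ^ c := pow_le_pow_right₀ hn hj
  have hgeom : p ^ (n - (k - 1)) ≤ 2 ^ c * (3 / 4) ^ n := by
    calc p ^ (n - (k - 1)) ≤ (3 / 4) ^ (n - (k - 1)) * (3 / 2 : ℝ) ^ (k - 1) :=
          (pow_le_pow_left₀ (by positivity) hp _).trans
            (le_mul_of_one_le_right (by positivity) (one_le_pow₀ (by norm_num)))
      _ = 2 ^ (k - 1) * (3 / 4) ^ n := by
          rw [show (3 / 2 : ℝ) = 2 * (3 / 4) by norm_num, mul_pow, ← mul_assoc,
            mul_comm _ ((2 : ℝ) ^ _), mul_assoc, ← pow_add, Nat.sub_add_cancel (by omega)]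
      _ ≤ 2 ^ c * (3 / 4) ^ n := by gcongr <;> norm_num; omega
  calc (n.choose k : ℝ) * n.choose (k - 1) * p ^ (n - (k - 1))
      ≤ n ^ c * n ^ c * (2 ^ c * (3 / 4) ^ n) := by
        gcongr
        exacts [hchoose k hkc, hchoose (k - 1) (by omega)]
    _ = 2 ^ c * n ^ (2 * c) * (3 / 4) ^ n := by ring

theorem choose_mul_choose_mul_pow_le_of_ge {η : ℝ} {n k L : ℕ} (hL : 1 ≤ η * L)
    (hkη : (k : ℝ) ≤ (1 - η) * n) (hkL : 64 ^ L ≤ k + 1) :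
    n.choose k * n.choose (k - 1) * ((k.choose (k / 2) : ℝ) / 2 ^ k) ^ (n - (k - 1))
      ≤ (1 / 2) ^ n := by
  set p := (k.choose (k / 2) : ℝ) / 2 ^ k
  set j := n - (k - 1) with hj
  have hη : 0 < η := by
    by_contra! h; nlinarith [(Nat.cast_nonneg L : (0 : ℝ) ≤ L)]
  have hkn : k ≤ n := by
    have : (k : ℝ) ≤ n := by nlinarith [(Nat.cast_nonneg n : (0 : ℝ) ≤ n)]
    exact_mod_cast this
  have hLj : n ≤ L * j := by
    have : (n : ℝ) ≤ j + k := by exact_mod_cast (show n ≤ j + k by omega)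
    have : (n : ℝ) ≤ L * j := by nlinarith [(Nat.cast_nonneg L : (0 : ℝ) ≤ L)]
    exact_mod_cast this
  have hbig : (64 : ℝ) ^ n ≤ (k + 1) ^ j := by
    calc (64 : ℝ) ^ n ≤ 64 ^ (L * j) := pow_le_pow_right₀ (by norm_num) hLj
      _ = ((64 : ℝ) ^ L) ^ j := pow_mul _ _ _
      _ ≤ (k + 1) ^ j := pow_le_pow_left₀ (by positivity) (by exact_mod_cast hkL) j
  have hsmall : 8 ^ n * p ^ j ≤ 1 := by
    refine (pow_le_pow_iff_left₀ (by positivity) zero_le_one two_ne_zero).1 ?_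
    calc (8 ^ n * p ^ j) ^ 2 = 64 ^ n * (p ^ 2) ^ j := by
          rw [mul_pow, ← pow_mul, ← pow_mul, mul_comm j, ← pow_mul, mul_comm n, pow_mul]
          norm_num
      _ ≤ ((k + 1) * p ^ 2) ^ j := by rw [mul_pow]; gcongr
      _ ≤ 1 ^ j := by gcongr; exact succ_mul_sq_choose_half_div_two_pow_le_one k
      _ = 1 ^ 2 := by simp
  calc (n.choose k : ℝ) * n.choose (k - 1) * p ^ j ≤ 2 ^ n * 2 ^ n * p ^ j := by
        gcongr <;> exact_mod_cast Nat.choose_le_two_pow _ _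
    _ = (1 / 2) ^ n * (8 ^ n * p ^ j) := by
        rw [← mul_assoc, ← mul_pow, ← mul_pow]; norm_num
    _ ≤ (1 / 2) ^ n := mul_le_of_le_one_right (by positivity) hsmall

theorem exists_choose_mul_choose_mul_pow_le {η : ℝ} (hη : 0 < η) :
    ∃ c : ℕ, ∀ n k : ℕ, 1 ≤ k → (k : ℝ) ≤ (1 - η) * n →
      n.choose k * n.choose (k - 1) * ((k.choose (k / 2) : ℝ) / 2 ^ k) ^ (n - (k - 1))
        ≤ 2 ^ c * n ^ (2 * c) * (3 / 4) ^ n := by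
  set L := ⌈η⁻¹⌉₊
  have hL : 1 ≤ η * L := by
    rw [← mul_inv_cancel₀ hη.ne']; gcongr; exact Nat.le_ceil _
  refine ⟨64 ^ L, fun n k hk hkη => ?_⟩
  have hkn : k ≤ n := by
    have : (k : ℝ) ≤ n := by nlinarith [(Nat.cast_nonneg n : (0 : ℝ) ≤ n)]
    exact_mod_cast this
  rcases le_or_gt k (64 ^ L) with hkc | hkc
  · exact choose_mul_choose_mul_pow_le_of_le hk hkn hkc
  · have hn : (1 : ℝ) ≤ n := by exact_mod_cast hk.trans hkn
    calc _ ≤ ((1 : ℝ) / 2) ^ n := choose_mul_choose_mul_pow_le_of_ge hL hkη (by omega)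
      _ ≤ (3 / 4) ^ n := pow_le_pow_left₀ (by norm_num) (by norm_num) n
      _ ≤ 2 ^ 64 ^ L * n ^ (2 * 64 ^ L) * (3 / 4) ^ n :=
        le_mul_of_one_le_left (by positivity)
          (one_le_mul_of_one_le_of_one_le (one_le_pow₀ one_le_two) (one_le_pow₀ hn))

theorem eventually_pow_mul_pow_le_rpow_neg (a : ℕ) {r : ℝ} (hr₀ : 0 ≤ r) (hr₁ : r < 1) (C : ℝ) :
    ∀ᶠ n : ℕ in atTop, (n : ℝ) ^ a * r ^ n ≤ (n : ℝ) ^ (-C) := by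
  set D := ⌈C⌉₊
  filter_upwards [(tendsto_pow_const_mul_const_pow_of_lt_one (a + D) hr₀ hr₁).eventually_le_const
    zero_lt_one, eventually_ge_atTop 1] with n hn hn₁
  have hn₁ : (1 : ℝ) ≤ n := by exact_mod_cast hn₁
  calc (n : ℝ) ^ a * r ^ n = n ^ (a + D) * r ^ n / n ^ D := by
        rw [pow_add]; field_simp
    _ ≤ 1 / n ^ D := by gcongr
    _ = (n : ℝ) ^ (-(D : ℝ)) := by rw [Real.rpow_neg (by positivity), Real.rpow_natCast, one_div]
    _ ≤ (n : ℝ) ^ (-C) := Real.rpow_le_rpow_of_exponent_le hn₁ (by linarith [Nat.le_ceil C])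

/-- **No structured null vectors for `Ξ`.**  For fixed `η ∈ (0,1)`, with overwhelming
probability an iid uniform `±1` sign matrix has no nontrivial `(1-η)n`-sparse null
vector. -/
theorem no_sparse_null_vectors_for_signs (η : ℝ) (hη : 0 < η ∧ η < 1) :
    ∀ C : ℝ, 0 < C → ∃ K : ℝ, 0 < K ∧ ∃ N : ℕ, ∀ n, N ≤ n →
      cprob (Finset.univ : Finset (Matrix (Fin n) (Fin n) Bool))
        (fun A => ∃ x : Fin n → ℝ, x ≠ 0 ∧
          ((Finset.univ.filter fun i => x i ≠ 0).card : ℝ) ≤ (1 - η) * n ∧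
          (sgn2r A).mulVec x = 0)
      ≤ K * (n : ℝ) ^ (-C) := by
  intro C _
  obtain ⟨c, hterm⟩ := exists_choose_mul_choose_mul_pow_le hη.1
  obtain ⟨N, hN⟩ := eventually_atTop.1 <|
    eventually_pow_mul_pow_le_rpow_neg (2 * c + 1) (by norm_num : (0 : ℝ) ≤ 3 / 4) (by norm_num) C
  refine ⟨2 ^ c, by positivity, N, fun n hn => ?_⟩
  set m := ⌊(1 - η) * n⌋₊
  have hmn : m ≤ n := Nat.floor_le_of_le (by nlinarith [hη.1, (Nat.cast_nonneg n : (0 : ℝ) ≤ n)])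
  calc _ ≤ cprob univ (fun A : Matrix (Fin n) (Fin n) Bool =>
          ∃ x : Fin n → ℝ, x ≠ 0 ∧ #{i | x i ≠ 0} ≤ m ∧ sgn2r A *ᵥ x = 0) :=
        cprob_mono _ fun A ⟨x, hx, hxη, hAx⟩ => ⟨x, hx, Nat.le_floor hxη, hAx⟩
    _ ≤ ∑ k ∈ Icc 1 m,
          n.choose k * n.choose (k - 1) * ((k.choose (k / 2) : ℝ) / 2 ^ k) ^ (n - (k - 1)) :=
        cprob_exists_sparse_null_sgn2r_le n m
    _ ≤ ∑ k ∈ Icc 1 m, 2 ^ c * (n : ℝ) ^ (2 * c) * (3 / 4) ^ n := by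
        refine sum_le_sum fun k hk => ?_
        obtain ⟨hk₁, hkm⟩ := mem_Icc.1 hk
        exact hterm n k hk₁ ((Nat.le_floor_iff' (by omega)).1 hkm)
    _ ≤ n * (2 ^ c * (n : ℝ) ^ (2 * c) * (3 / 4) ^ n) := by
        rw [sum_const, Nat.card_Icc, Nat.add_sub_cancel, nsmul_eq_mul]
        gcongr
    _ = 2 ^ c * ((n : ℝ) ^ (2 * c + 1) * (3 / 4) ^ n) := by ring
    _ ≤ 2 ^ c * (n : ℝ) ^ (-C) := by gcongr; exact hN n hn

end
end

section
/- Let M be a uniform random element of M_{n,d}, fix distinct i₁, i₂ ∈ [n], and let Fix ⊆ [n] be a (possibly random) set of column indices that is a function of the rows (R_i)_{i ∉ {i₁,i₂}} of M. Set A₁ = Ex_M(i₁,i₂) \ Fix and A₂ = Ex_M(i₂,i₁) \ Fix, and fix s with s ≤ min(|A₁|, |A₂|). Conditional on M, let S₁ ⊆ A₁ and S₂ ⊆ A₂ be chosen independently and uniformly at random among subsets of size s; conditional on M, S₁, S₂, let π : S₁ → S₂ be a uniform random bijection; and let ξ : [n] → {±1} be iid uniform signs independent of all other variables. Form M̃ from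 M by replacing, for each j ∈ S₁, the 2×2 minor of M with rows (i₁,i₂) and columns (j, π(j)) by I = [[1,0],[0,1]] if ξ(j) = +1 and by J = [[0,1],[1,0]] if ξ(j) = −1, leaving all other entries unchanged. Then M̃ has the same distribution as M. -/
/-!
Let `c` be the involution of the columns exchanging `j` and `π j` for the `j ∈ S₁` with
`ξ j = -1`. On rows `i₁, i₂` the shuffle is precomposition with `c`, and every column moved by `c`
just swaps its two entries in these rows; so `M̃ ∈ M_{n,d}`, the other rows and hence `Fix` are
unchanged, and `c` fixes `Fix` pointwise, giving `Ex_M̃ \ Fix = c (Ex_M \ Fix)`. Hence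
`(M, S₁, S₂, π, ξ) ↦ (M̃, c S₁, c S₂, c π c, ξ ∘ c)` is an involution of the admissible samples
that preserves their probability (all the uniform laws involved have the same sizes), and its
first coordinate is `M̃`; so `M̃` has the law of `M`.
-/

open scoped Classical

noncomputable section

/-- `M_{n,d}`: 0/1 matrices all of whose row and column sums equal `d`. -/
def regSet (n d : ℕ) : Finset (Matrix (Fin n) (Fin n) Bool) :=
  Finset.univ.filter fun A =>
    (∀ i, (Finset.univ.filter fun j => A i j = true).card = d) ∧
    (∀ j, (Finset.univ.filter fun i => A i j = true).card = d)

/-- `Ex_M(i₁,i₂) = N_M(i₁) \ N_M(i₂)`. -/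
def exSet {n : ℕ} (M : Matrix (Fin n) (Fin n) Bool) (i₁ i₂ : Fin n) : Finset (Fin n) :=
  Finset.univ.filter fun j => M i₁ j = true ∧ M i₂ j = false

/-- The matrix obtained from `M` by switching, for each `j ∈ T`, the `2 × 2` minor at
rows `(i₁,i₂)` and columns `(j, σ j)`: it is set to `I = [[1,0],[0,1]]` if `ξ j = true`
(sign `+1`) and to `J = [[0,1],[1,0]]` if `ξ j = false` (sign `-1`). -/
def shuffleAt {n : ℕ} (M : Matrix (Fin n) (Fin n) Bool) (i₁ i₂ : Fin n)
    (T : Finset (Fin n)) (σ : Equiv.Perm (Fin n)) (ξ : Fin n → Bool) :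
    Matrix (Fin n) (Fin n) Bool :=
  Matrix.of fun i j =>
    if i = i₁ then
      if j ∈ T then ξ j
      else if σ⁻¹ j ∈ T then !(ξ (σ⁻¹ j))
      else M i j
    else if i = i₂ then
      if j ∈ T then !(ξ j)
      else if σ⁻¹ j ∈ T then ξ (σ⁻¹ j)
      else M i j
    else M i j

/-- Uniform distribution on a finite set, with a default value when it is empty. -/
def uniformOn {α : Type*} (s : Finset α) (a₀ : α) : PMF α :=
  if h : s.Nonempty then PMF.uniformOfFinset s h else PMF.pure a₀

open Finset Equiv

namespace PMF
variable {α β : Type*}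

theorem map_congr_support {p : PMF α} {f g : α → β} (h : ∀ a ∈ p.support, f a = g a) :
    p.map f = p.map g := by
  ext b
  simp only [map_apply]
  refine tsum_congr fun a => ?_
  by_cases ha : a ∈ p.support
  · rw [h a ha]
  · rw [(mem_support_iff p a).not_left.mp ha]
    simp

theorem map_equiv_eq_self {p : PMF α} (e : α ≃ α) (he : ∀ a, p (e a) = p a) : p.map e = p := by
  ext b
  rw [map_apply, tsum_eq_single (e.symm b) (fun a ha => if_neg fun hb => ha (by simp [hb])),
    if_pos (e.apply_symm_apply b).symm, ← he, e.apply_symm_apply]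

theorem map_eq_map_of_equiv {p : PMF α} (e : α ≃ α) (he : ∀ a, p (e a) = p a) {f g : α → β}
    (h : ∀ a ∈ p.support, g (e a) = f a) : p.map f = p.map g :=
  calc p.map f = p.map (g ∘ e) := map_congr_support fun a ha => (h a ha).symm
    _ = (p.map e).map g := (map_comp _ _ _).symm
    _ = p.map g := by rw [map_equiv_eq_self e he]

theorem bind_map_prodMk_apply (p : PMF α) (q : α → PMF β) (a : α) (b : β) :
    (p.bind fun a => (q a).map (Prod.mk a)) (a, b) = p a * q a b := by
  rw [bind_apply, tsum_eq_single a]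
  · rw [map_apply, tsum_eq_single b] <;> simp +contextual [eq_comm]
  · intro a' ha'
    rw [map_apply]
    simp [Ne.symm ha']

end PMF

section Uniform
variable {α : Type*} {s : Finset α} {a₀ x : α}

theorem uniformOn_apply_of_mem (hx : x ∈ s) : uniformOn s a₀ x = (#s : ENNReal)⁻¹ := by
  rw [uniformOn, dif_pos (show s.Nonempty from ⟨x, hx⟩), PMF.uniformOfFinset_apply_of_mem _ hx]

theorem mem_of_uniformOn_ne_zero (hs : s.Nonempty) (hx : uniformOn s a₀ x ≠ 0) : x ∈ s := by
  rwa [uniformOn, dif_pos hs, ← PMF.mem_support_iff, PMF.mem_support_uniformOfFinset_iff] at hx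

end Uniform

section Perm
variable {α : Type*} [DecidableEq α]

theorem exists_perm_image_eq {s t : Finset α} (h : #s = #t) : ∃ τ : Perm α, s.image τ = t := by
  let e : s ≃ t := Finset.equivOfCardEq h
  refine ⟨Equiv.extendSubtype e, eq_of_subset_of_card_le ?_ ?_⟩
  · intro x hx
    obtain ⟨y, hy, rfl⟩ := mem_image.1 hx
    exact Equiv.extendSubtype_mem e y hy
  · rw [card_image_of_injective _ (Equiv.injective _), h]

theorem card_filter_image_conj [Fintype α] (e : Perm α) (s t : Finset α) :
    #{τ : Perm α | (s.image e).image τ = t.image e} = #{τ : Perm α | s.image τ = t} := by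
  refine card_equiv (MulAut.conj e⁻¹).toEquiv fun τ => ?_
  have : (s.image e).image τ = (s.image (e⁻¹ * τ * e)).image e := by
    simp [image_image, Function.comp_def]
  simp [this, image_inj e.injective]

end Perm

section PairSwap
variable {α : Type*} [DecidableEq α] {T : Finset α} {σ : Perm α} {ξ : α → Bool}

def pairSwap (T : Finset α) (σ : Perm α) (ξ : α → Bool) (k : α) : α :=
  if k ∈ T ∧ ξ k = false then σ k
  else if σ⁻¹ k ∈ T ∧ ξ (σ⁻¹ k) = false then σ⁻¹ k else k

theorem pairSwap_eq_self_or (k : α) :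
    pairSwap T σ ξ k = k ∨ (k ∈ T ∧ pairSwap T σ ξ k = σ k) ∨
      (pairSwap T σ ξ k ∈ T ∧ σ (pairSwap T σ ξ k) = k) := by
  unfold pairSwap
  split_ifs <;> simp_all

theorem pairSwap_involutive (hT : ∀ j ∈ T, σ j ∉ T) : Function.Involutive (pairSwap T σ ξ) := by
  intro k
  have hT' : ∀ j ∈ T, σ⁻¹ j ∉ T := fun j hj h => hT _ h (by simpa using hj)
  unfold pairSwap
  by_cases hk : k ∈ T <;> by_cases hk' : σ⁻¹ k ∈ T <;> cases hξ : ξ k <;>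
    cases hξ' : ξ (σ⁻¹ k) <;> simp_all

theorem pairSwap_conj (e : Perm α) :
    pairSwap (T.image e) (e * σ * e⁻¹) (ξ ∘ ⇑e⁻¹) = ⇑e ∘ pairSwap T σ ξ ∘ ⇑e⁻¹ := by
  ext k
  obtain ⟨k, rfl⟩ := e.surjective k
  simp only [pairSwap, Function.comp_apply, Perm.mul_apply, Perm.coe_inv, symm_apply_apply,
    mul_inv_rev, inv_inv, mem_image, EmbeddingLike.apply_eq_iff_eq, exists_eq_right]
  split_ifs <;> rfl

-- The identity when `T` and `σ T` meet, where `pairSwap` need not be a bijection.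
def pairSwapPerm (T : Finset α) (σ : Perm α) (ξ : α → Bool) : Perm α :=
  if h : ∀ j ∈ T, σ j ∉ T then (pairSwap_involutive (ξ := ξ) h).toPerm _ else 1

theorem coe_pairSwapPerm (hT : ∀ j ∈ T, σ j ∉ T) : ⇑(pairSwapPerm T σ ξ) = pairSwap T σ ξ := by
  rw [pairSwapPerm, dif_pos hT, Function.Involutive.coe_toPerm]

theorem pairSwapPerm_inv : (pairSwapPerm T σ ξ)⁻¹ = pairSwapPerm T σ ξ := by
  unfold pairSwapPerm
  split_ifs
  · exact Function.Involutive.toPerm_symm _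
  · exact inv_one

theorem pairSwapPerm_involutive : Function.Involutive (pairSwapPerm T σ ξ) := fun k => by
  have := (pairSwapPerm T σ ξ).symm_apply_apply k
  rwa [← Perm.inv_def, pairSwapPerm_inv] at this

theorem pairSwapPerm_mul_self : pairSwapPerm T σ ξ * pairSwapPerm T σ ξ = 1 :=
  Equiv.ext fun k => pairSwapPerm_involutive k

theorem pairSwapPerm_apply_of_notMem {k : α} (hk : k ∉ T) (hk' : k ∉ T.image σ) :
    pairSwapPerm T σ ξ k = k := by
  have : σ⁻¹ k ∉ T := fun h => hk' (by simpa using mem_image_of_mem σ h)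
  unfold pairSwapPerm
  split_ifs
  · simp only [Function.Involutive.coe_toPerm, pairSwap, hk, this, false_and, if_false]
  · rfl

theorem pairSwap_conj_pairSwapPerm (hT : ∀ j ∈ T, σ j ∉ T) :
    pairSwap (T.image (pairSwapPerm T σ ξ)) (pairSwapPerm T σ ξ * σ * pairSwapPerm T σ ξ)
      (ξ ∘ pairSwapPerm T σ ξ) = pairSwapPerm T σ ξ := by
  have hc := pairSwap_conj (T := T) (σ := σ) (ξ := ξ) (pairSwapPerm T σ ξ)
  rw [pairSwapPerm_inv, ← coe_pairSwapPerm (ξ := ξ) hT] at hc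
  rw [hc]
  ext k
  simp [pairSwapPerm_involutive k]

end PairSwap

section ShuffleAt
variable {n : ℕ} {M : Matrix (Fin n) (Fin n) Bool} {i₁ i₂ : Fin n} {T : Finset (Fin n)}
  {σ : Perm (Fin n)} {ξ : Fin n → Bool}

theorem apply_notMem_of_subset_exSet (h₁ : T ⊆ exSet M i₁ i₂) (h₂ : T.image σ ⊆ exSet M i₂ i₁) :
    ∀ j ∈ T, σ j ∉ T := by
  intro j hj hσj
  have := h₂ (mem_image_of_mem σ hj)
  have := h₁ hσj
  simp_all [exSet]

theorem shuffleAt_apply_of_ne {i : Fin n} (hi₁ : i ≠ i₁) (hi₂ : i ≠ i₂) (j : Fin n) :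
    shuffleAt M i₁ i₂ T σ ξ i j = M i j := by
  simp [shuffleAt, hi₁, hi₂]

theorem shuffleAt_apply_of_eq_or_eq (h12 : i₁ ≠ i₂) (h₁ : T ⊆ exSet M i₁ i₂)
    (h₂ : T.image σ ⊆ exSet M i₂ i₁) {i : Fin n} (hi : i = i₁ ∨ i = i₂) (j : Fin n) :
    shuffleAt M i₁ i₂ T σ ξ i j = M i (pairSwap T σ ξ j) := by
  have hT := apply_notMem_of_subset_exSet h₁ h₂
  have hex₁ : ∀ k ∈ T, M i₁ k = true ∧ M i₂ k = false := fun k hk => by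
    simpa [exSet] using h₁ hk
  have hex₂ : ∀ k, σ⁻¹ k ∈ T → M i₂ k = true ∧ M i₁ k = false := fun k hk => by
    simpa [exSet] using h₂ (mem_image_of_mem σ hk)
  rcases hi with rfl | rfl
  all_goals
    by_cases hj : j ∈ T <;> by_cases hj' : σ⁻¹ j ∈ T
    · exact absurd hj (by simpa using hT _ hj')
    all_goals
      cases hξ : ξ j <;> cases hξ' : ξ (σ⁻¹ j) <;>
        simp_all [shuffleAt, pairSwap, Ne.symm h12]

theorem exists_perm_shuffleAt_row (h12 : i₁ ≠ i₂) (h₁ : T ⊆ exSet M i₁ i₂)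
    (h₂ : T.image σ ⊆ exSet M i₂ i₁) (i : Fin n) :
    ∃ e : Perm (Fin n), ∀ j, shuffleAt M i₁ i₂ T σ ξ i j = M i (e j) := by
  by_cases hi : i = i₁ ∨ i = i₂
  · refine ⟨pairSwapPerm T σ ξ, fun j => ?_⟩
    rw [coe_pairSwapPerm (apply_notMem_of_subset_exSet h₁ h₂),
      shuffleAt_apply_of_eq_or_eq h12 h₁ h₂ hi]
  · rw [not_or] at hi
    exact ⟨1, shuffleAt_apply_of_ne hi.1 hi.2⟩

theorem exists_perm_shuffleAt_col (h12 : i₁ ≠ i₂) (h₁ : T ⊆ exSet M i₁ i₂)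
    (h₂ : T.image σ ⊆ exSet M i₂ i₁) (j : Fin n) :
    ∃ e : Perm (Fin n), ∀ i, shuffleAt M i₁ i₂ T σ ξ i j = M (e i) j := by
  rcases pairSwap_eq_self_or (σ := σ) (ξ := ξ) (T := T) j with hj | hswap
  · refine ⟨1, fun i => ?_⟩
    by_cases hi : i = i₁ ∨ i = i₂
    · rw [shuffleAt_apply_of_eq_or_eq h12 h₁ h₂ hi, hj, Perm.one_apply]
    · rw [not_or] at hi
      exact shuffleAt_apply_of_ne hi.1 hi.2 j
  -- a moved column is exchanged with one carrying the complementary pair of entries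
  have hflip : M i₁ (pairSwap T σ ξ j) = M i₂ j ∧ M i₂ (pairSwap T σ ξ j) = M i₁ j := by
    rcases hswap with ⟨hj, hc⟩ | ⟨hc, hσc⟩
    · have := h₁ hj
      have := h₂ (mem_image_of_mem σ hj)
      simp_all [exSet]
    · have := h₁ hc
      have := h₂ (mem_image_of_mem σ hc)
      simp_all [exSet]
  refine ⟨swap i₁ i₂, fun i => ?_⟩
  by_cases hi : i = i₁ ∨ i = i₂
  · rw [shuffleAt_apply_of_eq_or_eq h12 h₁ h₂ hi]
    rcases hi with rfl | rfl <;> simp [hflip]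
  · rw [not_or] at hi
    rw [shuffleAt_apply_of_ne hi.1 hi.2, swap_apply_of_ne_of_ne hi.1 hi.2]

theorem exSet_shuffleAt (h12 : i₁ ≠ i₂) (h₁ : T ⊆ exSet M i₁ i₂)
    (h₂ : T.image σ ⊆ exSet M i₂ i₁) {a b : Fin n} (ha : a = i₁ ∨ a = i₂) (hb : b = i₁ ∨ b = i₂) :
    exSet (shuffleAt M i₁ i₂ T σ ξ) a b = (exSet M a b).image (pairSwapPerm T σ ξ) := by
  ext j
  have hmem : j ∈ (exSet M a b).image (pairSwapPerm T σ ξ) ↔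
      (pairSwapPerm T σ ξ)⁻¹ j ∈ exSet M a b := by
    simp [← Equiv.eq_symm_apply]
  rw [hmem, pairSwapPerm_inv, coe_pairSwapPerm (apply_notMem_of_subset_exSet h₁ h₂)]
  simp [exSet, shuffleAt_apply_of_eq_or_eq h12 h₁ h₂ ha, shuffleAt_apply_of_eq_or_eq h12 h₁ h₂ hb]

end ShuffleAt

theorem mem_regSet_of_perm {n d : ℕ} {M M' : Matrix (Fin n) (Fin n) Bool} (hM : M ∈ regSet n d)
    (hrow : ∀ i, ∃ e : Perm (Fin n), ∀ j, M' i j = M i (e j))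
    (hcol : ∀ j, ∃ e : Perm (Fin n), ∀ i, M' i j = M (e i) j) : M' ∈ regSet n d := by
  simp only [regSet, mem_filter, mem_univ, true_and] at hM ⊢
  refine ⟨fun i => ?_, fun j => ?_⟩
  · obtain ⟨e, he⟩ := hrow i
    rw [← hM.1 i]
    exact card_equiv e fun j => by simp [he]
  · obtain ⟨e, he⟩ := hcol j
    rw [← hM.2 j]
    exact card_equiv e fun i => by simp [he]

section Laws
variable {n : ℕ}

def subsetLaw (A : Finset (Fin n)) (s : ℕ) : PMF (Finset (Fin n)) :=
  uniformOn (Finset.univ.filter fun T : Finset (Fin n) => T ⊆ A ∧ T.card = s) ∅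

def bijLaw (T₁ T₂ : Finset (Fin n)) : PMF (Perm (Fin n)) :=
  uniformOn (Finset.univ.filter fun σ : Equiv.Perm (Fin n) => T₁.image σ = T₂) (Equiv.refl (Fin n))

theorem filter_subset_card_eq_powersetCard (A : Finset (Fin n)) (s : ℕ) :
    (Finset.univ.filter fun T : Finset (Fin n) => T ⊆ A ∧ T.card = s) = A.powersetCard s := by
  ext T
  simp [mem_powersetCard]

theorem subsetLaw_apply_of_mem {A T : Finset (Fin n)} {s : ℕ} (hT : T ∈ A.powersetCard s) :
    subsetLaw A s T = ((#A).choose s : ENNReal)⁻¹ := by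
  rw [subsetLaw, filter_subset_card_eq_powersetCard, uniformOn_apply_of_mem hT, card_powersetCard]

theorem mem_of_subsetLaw_ne_zero {A T : Finset (Fin n)} {s : ℕ} (hs : s ≤ #A)
    (hT : subsetLaw A s T ≠ 0) : T ∈ A.powersetCard s := by
  rw [subsetLaw, filter_subset_card_eq_powersetCard] at hT
  exact mem_of_uniformOn_ne_zero (powersetCard_nonempty.2 hs) hT

theorem bijLaw_apply_of_image_eq {T₁ T₂ : Finset (Fin n)} {σ : Perm (Fin n)}
    (hσ : T₁.image σ = T₂) :
    bijLaw T₁ T₂ σ = (#{τ : Perm (Fin n) | T₁.image τ = T₂} : ENNReal)⁻¹ :=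
  uniformOn_apply_of_mem (mem_filter.2 ⟨mem_univ _, hσ⟩)

theorem image_eq_of_bijLaw_ne_zero {T₁ T₂ : Finset (Fin n)} {σ : Perm (Fin n)} (h : #T₁ = #T₂)
    (hσ : bijLaw T₁ T₂ σ ≠ 0) : T₁.image σ = T₂ := by
  obtain ⟨τ, hτ⟩ := exists_perm_image_eq h
  simpa using mem_of_uniformOn_ne_zero ⟨τ, by simpa using hτ⟩ hσ

end Laws

abbrev ShuffleData (n : ℕ) :=
  Matrix (Fin n) (Fin n) Bool × Finset (Fin n) × Finset (Fin n) × Perm (Fin n) × (Fin n → Bool)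

section ShuffleData
variable {n : ℕ} (d : ℕ) (i₁ i₂ : Fin n) (F : Matrix (Fin n) (Fin n) Bool → Finset (Fin n)) (s : ℕ)

def DependsOnlyOnOtherRows : Prop :=
  ∀ M M' : Matrix (Fin n) (Fin n) Bool, (∀ i, i ≠ i₁ → i ≠ i₂ → M i = M' i) → F M = F M'

def shuffleLaw (hreg : (regSet n d).Nonempty) : PMF (ShuffleData n) :=
  (PMF.uniformOfFinset (regSet n d) hreg).bind fun M =>
    ((subsetLaw (exSet M i₁ i₂ \ F M) s).bind fun T₁ =>
      ((subsetLaw (exSet M i₂ i₁ \ F M) s).bind fun T₂ =>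
        ((bijLaw T₁ T₂).bind fun σ =>
          (PMF.uniformOfFintype (Fin n → Bool)).map (Prod.mk σ)).map (Prod.mk T₂)).map
        (Prod.mk T₁)).map (Prod.mk M)

def IsAdmissible : ShuffleData n → Prop
  | (M, T₁, T₂, σ, _) => M ∈ regSet n d ∧ T₁ ∈ (exSet M i₁ i₂ \ F M).powersetCard s ∧
      T₂ ∈ (exSet M i₂ i₁ \ F M).powersetCard s ∧ T₁.image σ = T₂

def switchData : ShuffleData n → ShuffleData n
  | (M, T₁, T₂, σ, ξ) =>
    let c := pairSwapPerm T₁ σ ξ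
    (shuffleAt M i₁ i₂ T₁ σ ξ, T₁.image c, T₂.image c, c * σ * c, ξ ∘ c)

def switchIfAdmissible (t : ShuffleData n) : ShuffleData n :=
  if IsAdmissible d i₁ i₂ F s t then switchData i₁ i₂ t else t

variable {d i₁ i₂ F s}

theorem shuffleLaw_apply (hreg : (regSet n d).Nonempty) (M : Matrix (Fin n) (Fin n) Bool)
    (T₁ T₂ : Finset (Fin n)) (σ : Perm (Fin n)) (ξ : Fin n → Bool) :
    shuffleLaw d i₁ i₂ F s hreg (M, T₁, T₂, σ, ξ) =
      PMF.uniformOfFinset (regSet n d) hreg M * (subsetLaw (exSet M i₁ i₂ \ F M) s T₁ *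
        (subsetLaw (exSet M i₂ i₁ \ F M) s T₂ *
          (bijLaw T₁ T₂ σ * PMF.uniformOfFintype (Fin n → Bool) ξ))) := by
  simp only [shuffleLaw, PMF.bind_map_prodMk_apply]

theorem map_fst_shuffleLaw (hreg : (regSet n d).Nonempty) :
    (shuffleLaw d i₁ i₂ F s hreg).map Prod.fst = PMF.uniformOfFinset (regSet n d) hreg := by
  simp only [shuffleLaw, PMF.map_bind, PMF.map_comp]
  refine (congrArg _ (funext fun M => ?_)).trans (PMF.bind_pure _)
  simp only [Function.comp_def, PMF.bind_const]
  exact PMF.map_const _ _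

theorem isAdmissible_of_mem_support {hreg : (regSet n d).Nonempty}
    (hs : ∀ M ∈ regSet n d, s ≤ min (#(exSet M i₁ i₂ \ F M)) (#(exSet M i₂ i₁ \ F M)))
    {t : ShuffleData n} (ht : t ∈ (shuffleLaw d i₁ i₂ F s hreg).support) :
    IsAdmissible d i₁ i₂ F s t := by
  obtain ⟨M, T₁, T₂, σ, ξ⟩ := t
  rw [PMF.mem_support_iff, shuffleLaw_apply] at ht
  simp only [ne_eq, mul_eq_zero, not_or] at ht
  obtain ⟨hM, hT₁, hT₂, hσ, -⟩ := ht
  have hM : M ∈ regSet n d := (PMF.mem_support_uniformOfFinset_iff _ _).1 hM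
  have hsM := le_min_iff.1 (hs M hM)
  have hT₁ := mem_powersetCard.1 (mem_of_subsetLaw_ne_zero hsM.1 hT₁)
  have hT₂ := mem_powersetCard.1 (mem_of_subsetLaw_ne_zero hsM.2 hT₂)
  exact ⟨hM, mem_powersetCard.2 hT₁, mem_powersetCard.2 hT₂,
    image_eq_of_bijLaw_ne_zero (hT₁.2.trans hT₂.2.symm) hσ⟩

variable {M : Matrix (Fin n) (Fin n) Bool} {T T₁ T₂ : Finset (Fin n)} {σ : Perm (Fin n)}
  {ξ : Fin n → Bool}

theorem subset_exSet_of_isAdmissible (ht : IsAdmissible d i₁ i₂ F s (M, T₁, T₂, σ, ξ)) :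
    T₁ ⊆ exSet M i₁ i₂ \ F M ∧ T₁.image σ ⊆ exSet M i₂ i₁ \ F M :=
  ⟨(mem_powersetCard.1 ht.2.1).1, ht.2.2.2 ▸ (mem_powersetCard.1 ht.2.2.1).1⟩

theorem exSet_sdiff_shuffleAt (h12 : i₁ ≠ i₂) (hF : DependsOnlyOnOtherRows i₁ i₂ F)
    (h₁ : T ⊆ exSet M i₁ i₂ \ F M) (h₂ : T.image σ ⊆ exSet M i₂ i₁ \ F M)
    {a b : Fin n} (ha : a = i₁ ∨ a = i₂) (hb : b = i₁ ∨ b = i₂) :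
    exSet (shuffleAt M i₁ i₂ T σ ξ) a b \ F (shuffleAt M i₁ i₂ T σ ξ) =
      (exSet M a b \ F M).image (pairSwapPerm T σ ξ) := by
  have hFM : F (shuffleAt M i₁ i₂ T σ ξ) = F M :=
    hF _ M fun _ hi₁ hi₂ => funext (shuffleAt_apply_of_ne hi₁ hi₂)
  have hfix : (F M).image (pairSwapPerm T σ ξ) = F M := by
    refine (image_congr fun k hk => ?_).trans image_id
    exact pairSwapPerm_apply_of_notMem (fun h => (mem_sdiff.1 (h₁ h)).2 hk)
      (fun h => (mem_sdiff.1 (h₂ h)).2 hk)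
  rw [hFM, exSet_shuffleAt h12 (h₁.trans sdiff_subset) (h₂.trans sdiff_subset) ha hb,
    image_sdiff _ _ (pairSwapPerm T σ ξ).injective, hfix]

theorem isAdmissible_switchData (h12 : i₁ ≠ i₂) (hF : DependsOnlyOnOtherRows i₁ i₂ F)
    {t : ShuffleData n} (ht : IsAdmissible d i₁ i₂ F s t) :
    IsAdmissible d i₁ i₂ F s (switchData i₁ i₂ t) := by
  obtain ⟨M, T₁, T₂, σ, ξ⟩ := t
  obtain ⟨h₁, h₂⟩ := subset_exSet_of_isAdmissible ht
  obtain ⟨hM, hT₁, hT₂, hσ⟩ := ht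
  have h₁' := h₁.trans sdiff_subset
  have h₂' := h₂.trans sdiff_subset
  set c := pairSwapPerm T₁ σ ξ
  have hpow : ∀ {a b : Fin n} {T : Finset (Fin n)}, (a = i₁ ∨ a = i₂) → (b = i₁ ∨ b = i₂) →
      T ∈ (exSet M a b \ F M).powersetCard s → T.image c ∈
        (exSet (shuffleAt M i₁ i₂ T₁ σ ξ) a b \ F (shuffleAt M i₁ i₂ T₁ σ ξ)).powersetCard s := by
    intro a b T ha hb hT
    rw [exSet_sdiff_shuffleAt h12 hF h₁ h₂ ha hb]
    rw [mem_powersetCard] at hT ⊢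
    exact ⟨image_subset_image hT.1, by rw [card_image_of_injective _ c.injective, hT.2]⟩
  refine ⟨mem_regSet_of_perm hM (exists_perm_shuffleAt_row h12 h₁' h₂')
      (exists_perm_shuffleAt_col h12 h₁' h₂'),
    hpow (Or.inl rfl) (Or.inr rfl) hT₁, hpow (Or.inr rfl) (Or.inl rfl) hT₂, ?_⟩
  rw [← hσ, image_image, image_image]
  congr 1
  ext k
  simp [pairSwapPerm_involutive k]

theorem switchData_switchData (h12 : i₁ ≠ i₂) (hF : DependsOnlyOnOtherRows i₁ i₂ F)
    {t : ShuffleData n} (ht : IsAdmissible d i₁ i₂ F s t) :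
    switchData i₁ i₂ (switchData i₁ i₂ t) = t := by
  obtain ⟨M, T₁, T₂, σ, ξ⟩ := t
  obtain ⟨h₁, h₂⟩ := subset_exSet_of_isAdmissible ht
  obtain ⟨h₁', h₂'⟩ := subset_exSet_of_isAdmissible (isAdmissible_switchData h12 hF ht)
  have hT := apply_notMem_of_subset_exSet (h₁.trans sdiff_subset) (h₂.trans sdiff_subset)
  have hc := pairSwap_conj_pairSwapPerm (ξ := ξ) hT
  have hc' : pairSwapPerm (T₁.image (pairSwapPerm T₁ σ ξ))
      (pairSwapPerm T₁ σ ξ * σ * pairSwapPerm T₁ σ ξ) (ξ ∘ pairSwapPerm T₁ σ ξ) =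
      pairSwapPerm T₁ σ ξ := by
    ext k
    rw [coe_pairSwapPerm (apply_notMem_of_subset_exSet (h₁'.trans sdiff_subset)
      (h₂'.trans sdiff_subset)), hc]
  have hcc := (pairSwapPerm_involutive (T := T₁) (σ := σ) (ξ := ξ)).comp_self
  simp only [switchData, hc', image_image, hcc, image_id, Function.comp_assoc, Function.comp_id,
    Prod.mk.injEq, and_true, true_and]
  refine ⟨?_, by rw [← mul_assoc, ← mul_assoc, pairSwapPerm_mul_self, one_mul, mul_assoc,
    pairSwapPerm_mul_self, mul_one]⟩
  ext i j
  by_cases hi : i = i₁ ∨ i = i₂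
  · rw [shuffleAt_apply_of_eq_or_eq h12 (h₁'.trans sdiff_subset) (h₂'.trans sdiff_subset) hi, hc,
      shuffleAt_apply_of_eq_or_eq h12 (h₁.trans sdiff_subset) (h₂.trans sdiff_subset) hi,
      ← coe_pairSwapPerm hT, pairSwapPerm_involutive]
  · rw [not_or] at hi
    rw [shuffleAt_apply_of_ne hi.1 hi.2, shuffleAt_apply_of_ne hi.1 hi.2]

theorem shuffleLaw_switchData (h12 : i₁ ≠ i₂) (hF : DependsOnlyOnOtherRows i₁ i₂ F)
    (hreg : (regSet n d).Nonempty) {t : ShuffleData n} (ht : IsAdmissible d i₁ i₂ F s t) :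
    shuffleLaw d i₁ i₂ F s hreg (switchData i₁ i₂ t) = shuffleLaw d i₁ i₂ F s hreg t := by
  have ht' := isAdmissible_switchData h12 hF ht
  obtain ⟨M, T₁, T₂, σ, ξ⟩ := t
  obtain ⟨h₁, h₂⟩ := subset_exSet_of_isAdmissible ht
  obtain ⟨hM, hT₁, hT₂, hσ⟩ := ht
  obtain ⟨hM', hT₁', hT₂', hσ'⟩ := ht'
  simp only [switchData] at hM' hT₁' hT₂' hσ' ⊢
  rw [shuffleLaw_apply, shuffleLaw_apply, PMF.uniformOfFinset_apply_of_mem _ hM',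
    PMF.uniformOfFinset_apply_of_mem _ hM, subsetLaw_apply_of_mem hT₁', subsetLaw_apply_of_mem hT₁,
    subsetLaw_apply_of_mem hT₂', subsetLaw_apply_of_mem hT₂, bijLaw_apply_of_image_eq hσ',
    bijLaw_apply_of_image_eq hσ, PMF.uniformOfFintype_apply, PMF.uniformOfFintype_apply,
    exSet_sdiff_shuffleAt h12 hF h₁ h₂ (Or.inl rfl) (Or.inr rfl),
    exSet_sdiff_shuffleAt h12 hF h₁ h₂ (Or.inr rfl) (Or.inl rfl),
    card_image_of_injective _ (pairSwapPerm T₁ σ ξ).injective,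
    card_image_of_injective _ (pairSwapPerm T₁ σ ξ).injective, card_filter_image_conj]

theorem switchIfAdmissible_involutive (h12 : i₁ ≠ i₂) (hF : DependsOnlyOnOtherRows i₁ i₂ F) :
    Function.Involutive (switchIfAdmissible (n := n) d i₁ i₂ F s) := fun t => by
  by_cases ht : IsAdmissible d i₁ i₂ F s t
  · simp [switchIfAdmissible, ht, isAdmissible_switchData h12 hF ht,
      switchData_switchData h12 hF ht]
  · simp [switchIfAdmissible, ht]

theorem shuffleLaw_switchIfAdmissible (h12 : i₁ ≠ i₂) (hF : DependsOnlyOnOtherRows i₁ i₂ F)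
    (hreg : (regSet n d).Nonempty) (t : ShuffleData n) :
    shuffleLaw d i₁ i₂ F s hreg (switchIfAdmissible d i₁ i₂ F s t) =
      shuffleLaw d i₁ i₂ F s hreg t := by
  unfold switchIfAdmissible
  split_ifs with ht
  · exact shuffleLaw_switchData h12 hF hreg ht
  · rfl

end ShuffleData

/-- The bijection `π : T₁ → T₂` is sampled as a uniform permutation of `Fin n` mapping `T₁`
onto `T₂`. -/
theorem restricted_shuffling_general (n d : ℕ)
    (i₁ i₂ : Fin n) (h12 : i₁ ≠ i₂) (hreg : (regSet n d).Nonempty)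
    (F : Matrix (Fin n) (Fin n) Bool → Finset (Fin n))
    (hF : ∀ M M' : Matrix (Fin n) (Fin n) Bool,
      (∀ i, i ≠ i₁ → i ≠ i₂ → M i = M' i) → F M = F M')
    (s : ℕ)
    (hs : ∀ M ∈ regSet n d,
      s ≤ min ((exSet M i₁ i₂ \ F M).card) ((exSet M i₂ i₁ \ F M).card)) :
    ((PMF.uniformOfFinset (regSet n d) hreg).bind fun M =>
      (uniformOn (Finset.univ.filter fun T₁ : Finset (Fin n) =>
          T₁ ⊆ exSet M i₁ i₂ \ F M ∧ T₁.card = s) ∅).bind fun T₁ =>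
        (uniformOn (Finset.univ.filter fun T₂ : Finset (Fin n) =>
            T₂ ⊆ exSet M i₂ i₁ \ F M ∧ T₂.card = s) ∅).bind fun T₂ =>
          (uniformOn (Finset.univ.filter fun σ : Equiv.Perm (Fin n) =>
              T₁.image σ = T₂) (Equiv.refl (Fin n))).bind fun σ =>
            (PMF.uniformOfFintype (Fin n → Bool)).map fun ξ =>
              shuffleAt M i₁ i₂ T₁ σ ξ)
    = PMF.uniformOfFinset (regSet n d) hreg := by
  calc _ = (shuffleLaw d i₁ i₂ F s hreg).map
          fun t => shuffleAt t.1 i₁ i₂ t.2.1 t.2.2.2.1 t.2.2.2.2 := by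
        simp only [shuffleLaw, PMF.map_bind, PMF.map_comp]
        rfl
    _ = (shuffleLaw d i₁ i₂ F s hreg).map Prod.fst :=
        PMF.map_eq_map_of_equiv ((switchIfAdmissible_involutive h12 hF).toPerm _)
          (shuffleLaw_switchIfAdmissible h12 hF hreg) fun t ht => by
            simp only [Function.Involutive.coe_toPerm, switchIfAdmissible,
              if_pos (isAdmissible_of_mem_support hs ht)]
            rfl
    _ = PMF.uniformOfFinset (regSet n d) hreg := map_fst_shuffleLaw hreg

/-- **Restricted shuffling.**  Let `M` be uniform on `M_{n,d}`, `i₁ ≠ i₂`, and let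
`Fix = F(M)` be a set of column indices depending only on the rows of `M` other than
`i₁, i₂`.  Put `A₁ = Ex_M(i₁,i₂) \ Fix`, `A₂ = Ex_M(i₂,i₁) \ Fix` and fix
`s ≤ min(|A₁|,|A₂|)`.  Conditionally on `M`, draw uniform `s`-subsets `T₁ ⊆ A₁`,
`T₂ ⊆ A₂` independently; conditionally on these, draw a uniform bijection
`π : T₁ → T₂` (encoded as a uniform permutation mapping `T₁` onto `T₂`); and let `ξ`
be iid uniform signs independent of everything.  Then the shuffled matrix `M̃` is again
uniform on `M_{n,d}`. -/
theorem restricted_shuffling (n d : ℕ) (hd : 1 ≤ d ∧ d ≤ n)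
    (i₁ i₂ : Fin n) (h12 : i₁ ≠ i₂) (hreg : (regSet n d).Nonempty)
    (F : Matrix (Fin n) (Fin n) Bool → Finset (Fin n))
    (hF : ∀ M M' : Matrix (Fin n) (Fin n) Bool,
      (∀ i, i ≠ i₁ → i ≠ i₂ → M i = M' i) → F M = F M')
    (s : ℕ)
    (hs : ∀ M ∈ regSet n d,
      s ≤ min ((exSet M i₁ i₂ \ F M).card) ((exSet M i₂ i₁ \ F M).card)) :
    ((PMF.uniformOfFinset (regSet n d) hreg).bind fun M =>
      (uniformOn (Finset.univ.filter fun T₁ : Finset (Fin n) =>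
          T₁ ⊆ exSet M i₁ i₂ \ F M ∧ T₁.card = s) ∅).bind fun T₁ =>
        (uniformOn (Finset.univ.filter fun T₂ : Finset (Fin n) =>
            T₂ ⊆ exSet M i₂ i₁ \ F M ∧ T₂.card = s) ∅).bind fun T₂ =>
          (uniformOn (Finset.univ.filter fun σ : Equiv.Perm (Fin n) =>
              T₁.image σ = T₂) (Equiv.refl (Fin n))).bind fun σ =>
            (PMF.uniformOfFintype (Fin n → Bool)).map fun ξ =>
              shuffleAt M i₁ i₂ T₁ σ ξ)
    = PMF.uniformOfFinset (regSet n d) hreg :=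
  restricted_shuffling_general n d i₁ i₂ h12 hreg F hF s hs

end
end
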